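/- Let a,b ∈ ℝ and let B be a medial limit with respect to (Ω,𝒜,P). If g ∈ 𝓑_0^0 is admissible for B, then sol_a^b(E_g) = sol_a^b(E_0) + B_*, i.e., φ ∈ 𝓑_a^b satisfies (E_g) if and only if φ = Φ + B_* for some Φ ∈ 𝓑_a^b satisfying (E_0). -/
import Mathlib


open MeasureTheory unitInterval

noncomputable section

/-- A bounded real sequence. -/
def IsBddSeq (x : ℕ → ℝ) : Prop := ∃ C : ℝ, ∀ n, |x n| ≤ C

/-- A Banach limit: a linear (on bounded sequences), positive, shift-invariant and
normalized functional on the space of bounded real sequences. -/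
structure BanachLimit where
  toFun : (ℕ → ℝ) → ℝ
  map_add : ∀ x y : ℕ → ℝ, IsBddSeq x → IsBddSeq y →
    toFun (fun n => x n + y n) = toFun x + toFun y
  map_smul : ∀ (c : ℝ) (x : ℕ → ℝ), IsBddSeq x →
    toFun (fun n => c * x n) = c * toFun x
  nonneg : ∀ x : ℕ → ℝ, IsBddSeq x → (∀ n, 0 ≤ x n) → 0 ≤ toFun x
  shift : ∀ x : ℕ → ℝ, IsBddSeq x → toFun (fun n => x (n + 1)) = toFun x
  norm_one : toFun (fun _ => (1 : ℝ)) = 1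

/-- A medial limit with respect to a measure `P`: a Banach limit which commutes with
integration of uniformly bounded sequences of measurable functions. -/
def BanachLimit.IsMedial {Ω : Type*} [MeasurableSpace Ω] (B : BanachLimit)
    (P : Measure Ω) : Prop :=
  ∀ h : ℕ → Ω → ℝ, (∃ C : ℝ, ∀ m ω, |h m ω| ≤ C) → (∀ m, Measurable (h m)) →
    Measurable (fun ω => B.toFun (fun m => h m ω)) ∧
      ∫ ω, B.toFun (fun m => h m ω) ∂P = B.toFun (fun m => ∫ ω, h m ω ∂P)

/-- The operator `T`, `(Th)(x) = ∫_Ω h(f(x,ω)) dP(ω)`. -/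
def Tof {Ω : Type*} [MeasurableSpace Ω] (P : Measure Ω)
    (f : unitInterval → Ω → unitInterval) (h : unitInterval → ℝ) :
    unitInterval → ℝ :=
  fun x => ∫ ω, h (f x ω) ∂P

/-- The supremum norm of a function on `[0,1]`. -/
def supNorm (h : unitInterval → ℝ) : ℝ := ⨆ x, |h x|

/-- Membership in `𝓜([0,1],ℝ)`: `h` is bounded and `ω ↦ h (f x ω)` is measurable
for every `x`. -/
def MemM {Ω : Type*} [MeasurableSpace Ω]
    (f : unitInterval → Ω → unitInterval) (h : unitInterval → ℝ) : Prop :=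
  (∃ C : ℝ, ∀ x, |h x| ≤ C) ∧ ∀ x, Measurable fun ω => h (f x ω)

/-- The function `B_h(x) = B((T^m h(x))_{m ≥ 1})`. -/
def BLof {Ω : Type*} [MeasurableSpace Ω] (P : Measure Ω)
    (f : unitInterval → Ω → unitInterval) (B : BanachLimit)
    (h : unitInterval → ℝ) : unitInterval → ℝ :=
  fun x => B.toFun fun m => (Tof P f)^[m + 1] h x

/-- The function `g_k = Σ_{l=0}^{k-1} T^l g` (meaningful for `k ≥ 1`). -/
def gk {Ω : Type*} [MeasurableSpace Ω] (P : Measure Ω)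
    (f : unitInterval → Ω → unitInterval) (g : unitInterval → ℝ) (k : ℕ) :
    unitInterval → ℝ :=
  fun x => ∑ l ∈ Finset.range k, (Tof P f)^[l] g x

/-- The family `𝒢 = {g_k : k ≥ 1}` is bounded in the supremum norm. -/
def GBdd {Ω : Type*} [MeasurableSpace Ω] (P : Measure Ω)
    (f : unitInterval → Ω → unitInterval) (g : unitInterval → ℝ) : Prop :=
  ∃ C : ℝ, ∀ k : ℕ, 1 ≤ k → ∀ x, |gk P f g k x| ≤ C

/-- The function `B_*(x) = B((g_k(x))_{k ≥ 1})`. -/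
def BStar {Ω : Type*} [MeasurableSpace Ω] (P : Measure Ω)
    (f : unitInterval → Ω → unitInterval) (B : BanachLimit)
    (g : unitInterval → ℝ) : unitInterval → ℝ :=
  fun x => B.toFun fun k => gk P f g (k + 1) x

/-- `φ` satisfies equation (E_g): `ω ↦ φ(f(x,ω))` is measurable for every `x` and
`φ(x) = ∫_Ω φ(f(x,ω)) dP(ω) + g(x)` for every `x`. -/
def SatEq {Ω : Type*} [MeasurableSpace Ω] (P : Measure Ω)
    (f : unitInterval → Ω → unitInterval) (g φ : unitInterval → ℝ) : Prop :=
  (∀ x, Measurable fun ω => φ (f x ω)) ∧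
    ∀ x, φ x = (∫ ω, φ (f x ω) ∂P) + g x

/-- The class `𝓑_a^b` is closed under the Banach limit `B`. -/
def ClosedUnder {Ω : Type*} [MeasurableSpace Ω] (P : Measure Ω)
    (f : unitInterval → Ω → unitInterval) (𝓑 : Submodule ℝ (unitInterval → ℝ))
    (a b : ℝ) (B : BanachLimit) : Prop :=
  ∀ h : unitInterval → ℝ, h ∈ 𝓑 → h 0 = a → h 1 = b →
    BLof P f B h ∈ 𝓑 ∧ BLof P f B h 0 = a ∧ BLof P f B h 1 = b

lemma bddSeq_const (c : ℝ) : IsBddSeq (fun _ => c) := ⟨|c|, fun _ => le_rfl⟩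

lemma BanachLimit.const (B : BanachLimit) (c : ℝ) : B.toFun (fun _ => c) = c := by
  have h := B.map_smul c (fun _ => 1) ⟨1, by norm_num⟩
  simpa [B.norm_one] using h

lemma BanachLimit.map_sub (B : BanachLimit) (x y : ℕ → ℝ) (hx : IsBddSeq x)
    (hy : IsBddSeq y) : B.toFun (fun n => x n - y n) = B.toFun x - B.toFun y := by
  have hny : IsBddSeq (fun n => (-1 : ℝ) * y n) := by
    obtain ⟨D, hD⟩ := hy
    exact ⟨D, fun n => by simpa using hD n⟩
  have h1 := B.map_add x (fun n => (-1 : ℝ) * y n) hx hny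
  have h2 := B.map_smul (-1) y hy
  have : (fun n => x n - y n) = fun n => x n + (-1 : ℝ) * y n := by
    funext n; ring
  rw [this, h1, h2]; ring

lemma integrable_of_bound {Ω : Type*} [MeasurableSpace Ω] (P : Measure Ω)
    [IsFiniteMeasure P] (h : Ω → ℝ) (hm : Measurable h) (C : ℝ)
    (hC : ∀ ω, |h ω| ≤ C) : Integrable h P :=
  ⟨hm.aestronglyMeasurable,
    MeasureTheory.HasFiniteIntegral.of_bounded (C := C)
      (Filter.Eventually.of_forall fun ω => by simpa [Real.norm_eq_abs] using hC ω)⟩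

/-- If `B` is a medial limit and `g ∈ 𝓑_0^0` is admissible for `B`,
then `sol_a^b(E_g) = sol_a^b(E_0) + B_*`: a function `φ ∈ 𝓑_a^b` satisfies (E_g)
if and only if `φ = Φ + B_*` for some `Φ ∈ 𝓑_a^b` satisfying (E_0). -/
theorem stmt_11 {Ω : Type*} [MeasurableSpace Ω] (P : Measure Ω) [IsProbabilityMeasure P]
    (f : unitInterval → Ω → unitInterval)
    (hf0 : ∀ ω, f 0 ω = 0) (hf1 : ∀ ω, f 1 ω = 1)
    (𝓑 : Submodule ℝ (unitInterval → ℝ))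
    (h𝓑M : ∀ h ∈ 𝓑, MemM f h)
    (h𝓑T : ∀ h ∈ 𝓑, Tof P f h ∈ 𝓑)
    (a b : ℝ) (B : BanachLimit) (hB : B.IsMedial P)
    (g : unitInterval → ℝ) (hg : g ∈ 𝓑) (hg0 : g 0 = 0) (hg1 : g 1 = 0)
    (hadm : GBdd P f g ∧ BStar P f B g ∈ 𝓑 ∧
      BStar P f B g 0 = 0 ∧ BStar P f B g 1 = 0) :
    ∀ φ : unitInterval → ℝ,
      (φ ∈ 𝓑 ∧ φ 0 = a ∧ φ 1 = b ∧ SatEq P f g φ) ↔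
        ∃ Φ : unitInterval → ℝ, Φ ∈ 𝓑 ∧ Φ 0 = a ∧ Φ 1 = b ∧
          SatEq P f (fun _ => 0) Φ ∧ φ = fun x => Φ x + BStar P f B g x := by
  intro φ
  obtain ⟨⟨C, hC⟩, hSB, hS0, hS1⟩ := hadm
  set S := BStar P f B g with hSdef
  have hiter : ∀ l : ℕ, (Tof P f)^[l] g ∈ 𝓑 := by
    intro l
    induction l with
    | zero => simpa using hg
    | succ n ih => rw [Function.iterate_succ_apply']; exact h𝓑T _ ih
  have hgkmem : ∀ k : ℕ, gk P f g k ∈ 𝓑 := by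
    intro k
    have he : gk P f g k = ∑ l ∈ Finset.range k, (Tof P f)^[l] g := by
      funext x; simp [gk, Finset.sum_apply]
    rw [he]
    exact Submodule.sum_mem _ fun l _ => hiter l
  have hint : ∀ h ∈ 𝓑, ∀ x, Integrable (fun ω => h (f x ω)) P := by
    intro h hh x
    obtain ⟨⟨D, hD⟩, hmeas⟩ := h𝓑M h hh
    exact integrable_of_bound P _ (hmeas x) D fun ω => hD _
  have hTgk : ∀ (k : ℕ) (x : unitInterval),
      ∫ ω, gk P f g (k + 1) (f x ω) ∂P = gk P f g (k + 2) x - g x := by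
    intro k x
    have he : (fun ω => gk P f g (k + 1) (f x ω)) =
        fun ω => ∑ l ∈ Finset.range (k + 1), (Tof P f)^[l] g (f x ω) := rfl
    rw [he, integral_finset_sum _ fun l _ => hint _ (hiter l) x]
    have h1 : ∀ l : ℕ, ∫ ω, (Tof P f)^[l] g (f x ω) ∂P = (Tof P f)^[l + 1] g x := by
      intro l; rw [Function.iterate_succ_apply']; rfl
    simp only [h1]
    have h2 : gk P f g (k + 2) x =
        (∑ l ∈ Finset.range (k + 1), (Tof P f)^[l + 1] g x) + g x := by
      rw [gk, Finset.sum_range_succ']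
      simp
    rw [h2]; ring
  have hSsat : ∀ x, Measurable (fun ω => S (f x ω)) ∧
      ∫ ω, S (f x ω) ∂P = S x - g x := by
    intro x
    obtain ⟨hmeas, hintch⟩ := hB (fun m ω => gk P f g (m + 1) (f x ω))
      ⟨C, fun m ω => hC (m + 1) (by omega) _⟩
      (fun m => (h𝓑M _ (hgkmem (m + 1))).2 x)
    refine ⟨hmeas, ?_⟩
    have he : (fun ω => S (f x ω)) =
        fun ω => B.toFun (fun m => gk P f g (m + 1) (f x ω)) := rfl
    rw [he, hintch]
    have he2 : (fun m => ∫ ω, gk P f g (m + 1) (f x ω) ∂P) =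
        fun m => gk P f g (m + 2) x - g x := by
      funext m; exact hTgk m x
    rw [he2]
    have hbdd2 : IsBddSeq (fun m => gk P f g (m + 2) x) :=
      ⟨C, fun m => hC (m + 2) (by omega) x⟩
    rw [B.map_sub _ _ hbdd2 (bddSeq_const (g x)), B.const]
    have hshift := B.shift (fun m => gk P f g (m + 1) x)
      ⟨C, fun m => hC (m + 1) (by omega) x⟩
    have : B.toFun (fun m => gk P f g (m + 2) x) = S x := by
      have he3 : (fun m => gk P f g (m + 2) x) =
          fun n => gk P f g (n + 1 + 1) x := rfl
      rw [he3, hshift]; rfl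
    rw [this]
  constructor
  · rintro ⟨hφ, hφ0, hφ1, hφmeas, hφeq⟩
    refine ⟨fun x => φ x - S x, ?_,
      by show φ 0 - S 0 = a; rw [hφ0, hS0]; ring,
      by show φ 1 - S 1 = b; rw [hφ1, hS1]; ring,
      ⟨?_, ?_⟩, by funext x; ring⟩
    · exact Submodule.sub_mem _ hφ hSB
    · intro x
      exact ((h𝓑M _ (Submodule.sub_mem _ hφ hSB)).2 x)
    · intro x
      have hIφ := hint φ hφ x
      have hIS := hint S hSB x
      have : (fun ω => φ (f x ω) - S (f x ω)) =
          fun ω => (fun y => φ y - S y) (f x ω) := rfl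
      rw [← this, integral_sub hIφ hIS]
      have e1 := hφeq x
      have e2 := (hSsat x).2
      show φ x - S x = _
      rw [e1, e2]; ring
  · rintro ⟨Φ, hΦ, hΦ0, hΦ1, ⟨hΦmeas, hΦeq⟩, rfl⟩
    have hφmem : (fun x => Φ x + S x) ∈ 𝓑 := Submodule.add_mem _ hΦ hSB
    refine ⟨hφmem,
      by show Φ 0 + S 0 = a; rw [hΦ0, hS0]; ring,
      by show Φ 1 + S 1 = b; rw [hΦ1, hS1]; ring,
      fun x => (h𝓑M _ hφmem).2 x, ?_⟩
    intro x
    have hIΦ := hint Φ hΦ x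
    have hIS := hint S hSB x
    have : (fun ω => (fun y => Φ y + S y) (f x ω)) =
        fun ω => Φ (f x ω) + S (f x ω) := rfl
    rw [this, integral_add hIΦ hIS]
    have e2 := (hSsat x).2
    have e1 := hΦeq x
    simp only [add_zero] at e1
    rw [← e1]
    have e3 : S x = (∫ ω, S (f x ω) ∂P) + g x := by rw [e2]; ring
    show Φ x + S x = _
    rw [e3]; ring
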